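/- arXiv:2509.03998 — 5 statements merged into one kernel-verified Lean document; each statement's English description precedes it below -/
import Mathlib

section
/- Let Λ be a lattice of full rank in ℝ^n (n ≥ 1). Then for every δ > 0 there exists a lattice point x ∈ Λ whose first coordinate is at least δ⁻¹ and whose remaining n−1 coordinates all have absolute value at most δ. -/
/-!
Rounding coordinates with respect to a lattice basis puts a lattice point within a bounded
distance `C` of every point of `ℝⁿ`. To reach height `R` (here `R = δ⁻¹`), pick lattice points
`x M` within `C` of `M S e₀` for all `M : ℕ`, where `S = |R| + δ`. The errors `x M - M S e₀`
form a bounded sequence, so by Bolzano–Weierstrass two of them, say for `k < l`, are `δ`-close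
in the sup norm. Then `x l - x k` has first coordinate at least `(l - k) S - δ ≥ |R|` and all
other coordinates at most `δ` in absolute value.
-/

open Bornology

theorem ZLattice.exists_forall_exists_mem_norm_sub_le {E : Type*} [NormedAddCommGroup E]
    [NormedSpace ℝ E] [FiniteDimensional ℝ E] (L : Submodule ℤ E) [DiscreteTopology L]
    [IsZLattice ℝ L] :
    ∃ C, ∀ y : E, ∃ x ∈ L, ‖y - x‖ ≤ C := by
  let b := (Module.Free.chooseBasis ℤ L).ofZLatticeBasis ℝ L
  refine ⟨∑ i, ‖b i‖, fun y => ⟨ZSpan.floor b y, ?_, ZSpan.norm_fract_le b y⟩⟩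
  exact ((Module.Free.chooseBasis ℤ L).ofZLatticeBasis_span ℝ L).le (ZSpan.floor b y).2

theorem exists_lt_dist_lt_of_isBounded_range {X : Type*} [PseudoMetricSpace X] [ProperSpace X]
    {u : ℕ → X} (hu : IsBounded (Set.range u)) {ε : ℝ} (hε : 0 < ε) :
    ∃ k l, k < l ∧ dist (u l) (u k) < ε := by
  obtain ⟨a, -, φ, hφ, hlim⟩ := tendsto_subseq_of_bounded hu Set.mem_range_self
  obtain ⟨N, hN⟩ := Metric.cauchySeq_iff'.1 hlim.cauchySeq ε hε
  exact ⟨φ N, φ (N + 1), hφ N.lt_succ_self, hN (N + 1) N.le_succ⟩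

theorem ZLattice.exists_mem_le_apply_and_abs_apply_le {ι : Type*} [Fintype ι] [DecidableEq ι]
    (L : Submodule ℤ (ι → ℝ)) [DiscreteTopology L] [IsZLattice ℝ L] (i₀ : ι) (R : ℝ)
    {δ : ℝ} (hδ : 0 < δ) :
    ∃ x ∈ L, R ≤ x i₀ ∧ ∀ i ≠ i₀, |x i| ≤ δ := by
  obtain ⟨C, hC⟩ := ZLattice.exists_forall_exists_mem_norm_sub_le L
  set S := |R| + δ with hS_def
  let y : ℕ → ι → ℝ := fun M => Pi.single i₀ (M * S)
  choose x hxL hxy using fun M => hC (y M)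
  have hbdd : IsBounded (Set.range fun M => x M - y M) :=
    (Metric.isBounded_closedBall (x := 0) (r := C)).subset <| Set.range_subset_iff.2 fun M => by
      simpa [norm_sub_rev] using hxy M
  obtain ⟨k, l, hkl, hclose⟩ := exists_lt_dist_lt_of_isBounded_range hbdd hδ
  have hcoord : ∀ i, |(x l - x k - (y l - y k)) i| < δ := fun i =>
    (norm_le_pi_norm _ i).trans_lt (by rwa [dist_eq_norm, sub_sub_sub_comm] at hclose)
  refine ⟨x l - x k, sub_mem (hxL l) (hxL k), ?_, fun i hi => ?_⟩
  · have hkl' : (k : ℝ) + 1 ≤ l := by exact_mod_cast hkl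
    have hS : S ≤ (l - k : ℝ) * S := le_mul_of_one_le_left (by positivity) (by linarith)
    have h₀ := (abs_lt.1 (hcoord i₀)).1
    simp only [y, Pi.sub_apply, Pi.single_eq_same] at h₀
    rw [Pi.sub_apply]
    linarith [le_abs_self R]
  · simpa [y, Pi.single_eq_of_ne hi] using (hcoord i).le

/-- Let `Λ` be a lattice of full rank in `ℝ^n` (`n ≥ 1`), i.e. a discrete subgroup whose
`ℝ`-span is all of `ℝ^n`. Then for every `δ > 0` there is a lattice point `x ∈ Λ` whose
first coordinate is at least `δ⁻¹` and whose remaining coordinates have absolute value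
at most `δ`. -/
theorem stmt0 (n : ℕ) (hn : 0 < n) (Λ : AddSubgroup (Fin n → ℝ))
    (hdisc : DiscreteTopology Λ)
    (hfull : Submodule.span ℝ (Λ : Set (Fin n → ℝ)) = ⊤) :
    ∀ δ : ℝ, 0 < δ → ∃ x ∈ Λ, δ⁻¹ ≤ x ⟨0, hn⟩ ∧
      ∀ i : Fin n, i ≠ ⟨0, hn⟩ → |x i| ≤ δ := by
  intro δ hδ
  have : DiscreteTopology (AddSubgroup.toIntSubmodule Λ) := hdisc
  have : IsZLattice ℝ (AddSubgroup.toIntSubmodule Λ) := ⟨hfull⟩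
  exact ZLattice.exists_mem_le_apply_and_abs_apply_le (AddSubgroup.toIntSubmodule Λ) ⟨0, hn⟩ δ⁻¹ hδ
end

section
/- Let Λ be a lattice of full rank in ℝ^n and π : ℝ^n → ℝ^{n-1} the projection onto the last n−1 coordinates. If the kernel of π restricted to Λ is trivial, then π(Λ) is not discrete in ℝ^{n-1}. -/
open Submodule Module

lemma finrank_le_of_discrete {E : Type*} [NormedAddCommGroup E]
    [NormedSpace ℝ E] [FiniteDimensional ℝ E] (L : Submodule ℤ E) [DiscreteTopology L] :
    finrank ℤ L ≤ finrank ℝ E := by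
  let f := (span ℝ (L : Set E)).subtype
  let L₀ := L.comap (f.restrictScalars ℤ)
  have h_img : f '' L₀ = L := by
    rw [← LinearMap.coe_restrictScalars ℤ f, ← Submodule.map_coe (f.restrictScalars ℤ),
      Submodule.map_comap_eq_self]
    exact fun x hx ↦ LinearMap.mem_range.mpr ⟨⟨x, Submodule.subset_span hx⟩, rfl⟩
  have hd : DiscreteTopology L₀ := by
    refine DiscreteTopology.preimage_of_continuous_injective (L : Set E) ?_ (injective_subtype _)
    exact LinearMap.continuous_of_finiteDimensional f
  have hz : IsZLattice ℝ L₀ := ⟨by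
    rw [← (Submodule.map_injective_of_injective (injective_subtype _)).eq_iff, Submodule.map_span,
      Submodule.map_top, range_subtype, h_img]⟩
  have hmap : L₀.map (f.restrictScalars ℤ) = L := SetLike.ext'_iff.mpr h_img
  have e : L₀ ≃ₗ[ℤ] L :=
    (Submodule.equivMapOfInjective (f.restrictScalars ℤ) (injective_subtype _) L₀).trans
      (LinearEquiv.ofEq _ _ hmap)
  rw [← e.finrank_eq, ZLattice.rank ℝ L₀]
  exact finrank_le _

/-- Let `Λ` be a lattice of full rank in `ℝ^(n+1)` and `π` the projection onto the last `n`
coordinates. If the kernel of `π` restricted to `Λ` is trivial, then `π(Λ)` is not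
discrete. -/
theorem stmt1 (n : ℕ) (Λ : AddSubgroup (Fin (n + 1) → ℝ))
    (hdisc : DiscreteTopology Λ)
    (hfull : Submodule.span ℝ (Λ : Set (Fin (n + 1) → ℝ)) = ⊤)
    (π : (Fin (n + 1) → ℝ) →+ (Fin n → ℝ))
    (hπ : ∀ x : Fin (n + 1) → ℝ, π x = fun i : Fin n => x i.succ)
    (hker : ∀ x ∈ Λ, π x = 0 → x = 0) :
    ¬ DiscreteTopology (Λ.map π) := by
  intro h
  set Λ' : Submodule ℤ (Fin (n + 1) → ℝ) := AddSubgroup.toIntSubmodule Λ with hΛ'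
  set M' : Submodule ℤ (Fin n → ℝ) := AddSubgroup.toIntSubmodule (Λ.map π) with hM'
  have hd1 : DiscreteTopology Λ' := hdisc
  have hd2 : DiscreteTopology M' := h
  have hz : IsZLattice ℝ Λ' := ⟨hfull⟩
  have hrank : finrank ℤ Λ' = n + 1 := by
    rw [ZLattice.rank ℝ Λ']
    simp
  have hmem : ∀ x ∈ Λ', π.toIntLinearMap x ∈ M' := fun x hx => ⟨x, hx, rfl⟩
  let g : Λ' →ₗ[ℤ] M' := π.toIntLinearMap.restrict hmem
  have hgbij : Function.Bijective g := by
    constructor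
    · intro a b hab
      have hab' : π (a : Fin (n+1) → ℝ) = π b := congrArg Subtype.val hab
      have := hker ((a : Fin (n+1) → ℝ) - b) (sub_mem a.2 b.2) (by
        rw [map_sub, sub_eq_zero, hab'])
      exact Subtype.ext (by rwa [sub_eq_zero] at this)
    · rintro ⟨y, hy⟩
      obtain ⟨x, hx, rfl⟩ := hy
      exact ⟨⟨x, hx⟩, rfl⟩
  have e : Λ' ≃ₗ[ℤ] M' := LinearEquiv.ofBijective g hgbij
  have hle : finrank ℤ M' ≤ n := by
    have := finrank_le_of_discrete M'
    simpa using this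
  rw [← e.finrank_eq, hrank] at hle
  omega
end

section
/- Let K/k be a quadratic extension of number fields and let 𝔬_K¹ be the group of norm-one units. The group 𝔬_K¹ is infinite if and only if at least one archimedean place of k splits in K. -/
/-!
A quadratic extension of number fields is Galois, and its Galois group acts transitively on the
places of `K` above a given place of `k`.
If no place splits, every automorphism fixes every place `w` of `K`, so a norm-one unit `ε`
satisfies `w ε ^ [K : k] = w (N ε) = 1`, hence `w ε = 1` for all `w`: it is a root of unity.
If `w₁ ≠ w₂` lie above the same place and `σ • w₁ = w₂`, Dirichlet's unit theorem gives a
unit `u` with `w₁ u ≠ w₂ u`; then `ε = u / σ⁻¹ u` has norm one and `w₁ ε = w₁ u / w₂ u ≠ 1`,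
so `ε` has infinite order.
-/

open NumberField InfinitePlace

namespace NumberField

lemma InfinitePlace.apply_algebraMap_norm {k K : Type*} [Field k] [Field K] [Algebra k K]
    [FiniteDimensional k K] [IsGalois k K] {w : InfinitePlace K}
    (hw : ∀ σ : Gal(K/k), σ • w = w) (x : K) :
    w (algebraMap k K (Algebra.norm k x)) = w x ^ Module.finrank k K := by
  have hσ (σ : Gal(K/k)) : w (σ x) = w x := by
    change (σ⁻¹ • w) x = w x
    rw [hw]
  rw [Algebra.norm_eq_prod_automorphisms, map_prod, Finset.prod_congr rfl fun σ _ ↦ hσ σ,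
    Finset.prod_const, Finset.card_univ, ← Nat.card_eq_fintype_card,
    IsGalois.card_aut_eq_finrank]

lemma Units.exists_apply_ne {K : Type*} [Field K] [NumberField K] {w₁ w₂ : InfinitePlace K}
    (hne : w₁ ≠ w₂) : ∃ u : (𝓞 K)ˣ, w₁ u ≠ w₂ u := by
  obtain ⟨u, hu⟩ := Units.dirichletUnitTheorem.exists_unit K w₁
  refine ⟨u, fun heq ↦ (Units.sum_mult_mul_log u).not_lt ?_⟩
  have hlog (w : InfinitePlace K) : Real.log (w u) < 0 := by
    by_cases hw : w = w₁
    · rw [hw, heq]; exact hu w₂ hne.symm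
    · exact hu w hw
  exact Finset.sum_neg (fun w _ ↦ mul_neg_of_pos_of_neg (by exact_mod_cast mult_pos) (hlog w))
    Finset.univ_nonempty

namespace Units

variable {k K : Type*} [Field k] [Field K] [Algebra k K]

variable (k K) in
def normOne : Subgroup (𝓞 K)ˣ where
  carrier := {ε | Algebra.norm k (ε : K) = 1}
  one_mem' := by simp
  mul_mem' {a b} ha hb := by simp_all
  inv_mem' {a} ha := by
    have h : Algebra.norm k ((a⁻¹ : (𝓞 K)ˣ) : K) * Algebra.norm k (a : K) = 1 := by
      rw [← map_mul, ← coe_mul, inv_mul_cancel, coe_one, map_one]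
    rwa [show Algebra.norm k (a : K) = 1 from ha, mul_one] at h

lemma mem_normOne {ε : (𝓞 K)ˣ} : ε ∈ normOne k K ↔ Algebra.norm k (ε : K) = 1 :=
  Iff.rfl

variable [NumberField k] [NumberField K] [IsGalois k K]

lemma normOne_le_torsion
    (hinj : Function.Injective fun w : InfinitePlace K ↦ w.comap (algebraMap k K)) :
    normOne k K ≤ torsion K := by
  intro ε hε
  refine (mem_torsion K).mpr fun w ↦ ?_
  have hfix (σ : Gal(K/k)) : σ • w = w := hinj (mem_orbit_iff.mp ⟨σ, rfl⟩).symm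
  have hpow := apply_algebraMap_norm hfix (ε : K)
  rw [mem_normOne.mp hε, map_one, map_one, eq_comm] at hpow
  exact (pow_eq_one_iff_of_nonneg (apply_nonneg w _) Module.finrank_pos.ne').mp hpow

lemma exists_mem_normOne_apply_ne_one {w₁ w₂ : InfinitePlace K} (hne : w₁ ≠ w₂)
    (h : w₁.comap (algebraMap k K) = w₂.comap (algebraMap k K)) :
    ∃ ε ∈ normOne k K, w₁ ε ≠ 1 := by
  obtain ⟨σ, rfl⟩ := exists_smul_eq_of_comap_eq h
  obtain ⟨u, hu⟩ := exists_apply_ne hne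
  let v : (𝓞 K)ˣ := Units.map (RingOfIntegers.mapAlgEquiv σ.symm : 𝓞 K →* 𝓞 K) u
  have hv : (v : K) = σ.symm u := rfl
  have hε : ((u * v⁻¹ : (𝓞 K)ˣ) : K) = u / σ.symm u := by
    rw [eq_div_iff (hv ▸ coe_ne_zero v), ← hv, ← coe_mul, inv_mul_cancel_right]
  refine ⟨u * v⁻¹, ?_, ?_⟩
  · rw [mem_normOne, hε, div_eq_mul_inv, map_mul, Algebra.norm_inv,
      Algebra.norm_eq_of_algEquiv, mul_inv_cancel₀ (Algebra.norm_ne_zero_iff.mpr (coe_ne_zero u))]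
  · rw [hε, map_div₀, ← InfinitePlace.smul_apply, ne_eq, div_eq_one_iff_eq (pos_at_place u _).ne']
    exact hu

theorem infinite_normOne_iff : Infinite (normOne k K) ↔ ∃ w₁ w₂ : InfinitePlace K,
    w₁ ≠ w₂ ∧ w₁.comap (algebraMap k K) = w₂.comap (algebraMap k K) := by
  constructor
  · intro hinf
    by_contra! hsplit
    have hinj : Function.Injective fun w : InfinitePlace K ↦ w.comap (algebraMap k K) :=
      fun w₁ w₂ h ↦ by_contra fun hne ↦ hsplit w₁ w₂ hne h
    have := Finite.of_injective _ (Subgroup.inclusion_injective (normOne_le_torsion hinj))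
    exact not_finite (normOne k K)
  · rintro ⟨w₁, w₂, hne, h⟩
    obtain ⟨ε, hε, hw⟩ := exists_mem_normOne_apply_ne_one hne h
    by_contra hfin
    rw [not_infinite_iff_finite] at hfin
    have hord : IsOfFinOrder ε :=
      (normOne k K).subtype.isOfFinOrder (isOfFinOrder_of_finite (⟨ε, hε⟩ : normOne k K))
    exact hw ((mem_torsion K).mp ((CommGroup.mem_torsion _).mpr hord) w₁)

end Units

end NumberField

/-- For a quadratic extension `K/k` of number fields, the group of norm-one units of `𝓞 K`
is infinite if and only if at least one archimedean place of `k` splits in `K`, i.e. has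
two distinct places of `K` above it. -/
theorem stmt5 (k K : Type*) [Field k] [Field K] [NumberField k] [NumberField K]
    [Algebra k K] (hquad : Module.finrank k K = 2)
    (U : Subgroup (𝓞 K)ˣ)
    (hU : ∀ ε : (𝓞 K)ˣ, ε ∈ U ↔ Algebra.norm k ((ε : 𝓞 K) : K) = 1) :
    Infinite U ↔ ∃ (v : InfinitePlace k) (w₁ w₂ : InfinitePlace K), w₁ ≠ w₂ ∧
      w₁.comap (algebraMap k K) = v ∧ w₂.comap (algebraMap k K) = v := by
  have : Algebra.IsQuadraticExtension k K := { finrank_eq_two' := hquad }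
  obtain rfl : U = Units.normOne k K := Subgroup.ext hU
  rw [Units.infinite_normOne_iff]
  constructor
  · rintro ⟨w₁, w₂, hne, h⟩
    exact ⟨_, w₁, w₂, hne, rfl, h.symm⟩
  · rintro ⟨v, w₁, w₂, hne, rfl, h⟩
    exact ⟨w₁, w₂, hne, h.symm⟩
end

section
/- Let K/k be a quadratic extension of number fields, v₀ a place of k with K ⊆ k_{v₀}, w₀ a place of K above v₀, and U a finite-index subgroup of the norm-one unit group 𝔬_K¹. Then for every δ > 0 there exists ε ∈ U with |ε|_{w₀} < δ and 1/(1+δ) < |ε|_w < 1+δ for all archimedean places w of K not lying above v₀. -/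
/-!
Write `L(u) = (mult w · log w(u))_w` for the logarithmic vector of a unit `u` of `K`. By Dirichlet's
unit theorem the vectors `L(u)` span the hyperplane `∑_w x_w = 0` over `ℝ`. With `n = [K : k]`, the
unit `u ^ n / N_{K/k}(u)` has norm one, and its logarithmic vector is `T (L u)` for the linear map
`T = n • id - F`, where `(F x)_w = (mult w / mult v) ∑_{w' ∣ v} x_{w'}` for `w ∣ v`. Since `F` kills
`e = δ_{w₁} - δ_{w₀}` for two places `w₁ ≠ w₀` above `v₀`, `T (n⁻¹ • e) = e`, so `e` lies in the
real span of `L(𝔬_K¹)`, and hence of `L(U)` since `U` has finite index. A vector in the real span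
of a subgroup of a finite-dimensional space is approximated by the subgroup along multiples `t • e`
with `t` arbitrarily large (a Dirichlet-type approximation, by compactness). A unit `ε ∈ U` with
`L(ε) ≈ t • e` is tiny at `w₀` and has absolute value close to `1` at every place not above `v₀`.
-/

open NumberField NumberField.InfinitePlace Finset

noncomputable section

section RelativeNorm

variable {k K : Type*} [Field k] [Field K] [NumberField k] [NumberField K] [Algebra k K]

def algHomEquivRingHomComp (φ : k →+* ℂ) :
    letI := φ.toAlgebra
    (K →ₐ[k] ℂ) ≃ {σ : K →+* ℂ // σ.comp (algebraMap k K) = φ} :=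
  letI := φ.toAlgebra
  { toFun σ := ⟨σ, RingHom.ext σ.commutes⟩
    invFun σ := ⟨σ.1, RingHom.congr_fun σ.2⟩
    left_inv _ := rfl
    right_inv _ := rfl }

open scoped Classical in
theorem prod_norm_comp_eq_norm_norm (φ : k →+* ℂ) (x : K) :
    ∏ σ : K →+* ℂ with σ.comp (algebraMap k K) = φ, ‖σ x‖ = ‖φ (Algebra.norm k x)‖ := by
  let := φ.toAlgebra
  rw [Finset.prod_subtype (p := fun σ : K →+* ℂ ↦ σ.comp (algebraMap k K) = φ) _
      (fun _ ↦ by simp) (fun σ ↦ ‖σ x‖),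
    ← (algHomEquivRingHomComp φ).prod_comp, show φ (Algebra.norm k x) = algebraMap k ℂ _ from rfl,
    Algebra.norm_eq_prod_embeddings, norm_prod]
  rfl

open scoped Classical in
theorem prod_comap_eq_pow_mult_norm (v : InfinitePlace k) (x : K) :
    ∏ w : InfinitePlace K with w.comap (algebraMap k K) = v, w x ^ w.mult
      = v (Algebra.norm k x) ^ v.mult := by
  have hmk (w : InfinitePlace K) :
      ∏ σ : K →+* ℂ with InfinitePlace.mk σ = w, ‖σ x‖ = w x ^ w.mult := by
    rw [← card_filter_mk_eq w, ← Finset.prod_const]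
    exact Finset.prod_congr rfl fun σ hσ ↦ by rw [← (mem_filter.mp hσ).2, apply]
  calc ∏ w : InfinitePlace K with w.comap (algebraMap k K) = v, w x ^ w.mult
      = ∏ σ : K →+* ℂ with InfinitePlace.mk (σ.comp (algebraMap k K)) = v, ‖σ x‖ := by
        rw [← Finset.prod_fiberwise_of_maps_to (g := InfinitePlace.mk)
          (t := {w | w.comap (algebraMap k K) = v}) (fun σ hσ ↦ by simpa [comap_mk] using hσ)]
        refine Finset.prod_congr rfl fun w hw ↦ ?_
        rw [← hmk]
        congr 1
        ext σ
        simp only [mem_filter, mem_univ, true_and] at hw ⊢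
        exact ⟨fun h ↦ ⟨by rwa [← comap_mk, h], h⟩, And.right⟩
    _ = ∏ φ : k →+* ℂ with InfinitePlace.mk φ = v, v (Algebra.norm k x) := by
        rw [← Finset.prod_fiberwise_of_maps_to (g := fun σ ↦ σ.comp (algebraMap k K))
          (t := {φ | InfinitePlace.mk φ = v}) (fun σ hσ ↦ by simpa using hσ)]
        refine Finset.prod_congr rfl fun φ hφ ↦ ?_
        rw [← (mem_filter.mp hφ).2, apply, ← prod_norm_comp_eq_norm_norm]
        congr 1
        ext σ
        simp only [mem_filter, mem_univ, true_and] at hφ ⊢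
        exact ⟨And.right, fun h ↦ ⟨by rw [h], h⟩⟩
    _ = v (Algebra.norm k x) ^ v.mult := by rw [Finset.prod_const, card_filter_mk_eq]

end RelativeNorm

section LogVector

variable {K : Type*} [Field K]

def logVector (x : K) : InfinitePlace K → ℝ := fun w ↦ w.mult * Real.log (w x)

theorem logVector_mul {x y : K} (hx : x ≠ 0) (hy : y ≠ 0) :
    logVector (x * y) = logVector x + logVector y := by
  ext w
  simp [logVector, Real.log_mul (w.pos_iff.mpr hx).ne' (w.pos_iff.mpr hy).ne', mul_add]

variable (K) in
def unitsLog : Additive (𝓞 K)ˣ →+ (InfinitePlace K → ℝ) where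
  toFun u := logVector ((u.toMul : 𝓞 K) : K)
  map_zero' := by ext; simp [logVector]
  map_add' u v := by
    simpa using logVector_mul (Units.coe_ne_zero u.toMul) (Units.coe_ne_zero v.toMul)

theorem unitsLog_apply (u : (𝓞 K)ˣ) : unitsLog K (.ofMul u) = logVector ((u : 𝓞 K) : K) := rfl

theorem pow_mult_eq_exp_unitsLog (u : (𝓞 K)ˣ) (w : InfinitePlace K) :
    w ((u : 𝓞 K) : K) ^ w.mult = Real.exp (unitsLog K (.ofMul u) w) := by
  change _ = Real.exp (w.mult * Real.log _)
  rw [Real.exp_nat_mul, Real.exp_log (w.pos_iff.mpr (Units.coe_ne_zero _))]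
  rfl

theorem sum_unitsLog [NumberField K] (u : Additive (𝓞 K)ˣ) : ∑ w, unitsLog K u w = 0 :=
  Units.sum_mult_mul_log u.toMul

end LogVector

section Dirichlet

variable {K : Type*} [Field K] [NumberField K]

theorem mem_span_range_unitsLog {x : InfinitePlace K → ℝ} (hx : ∑ w, x w = 0) :
    x ∈ Submodule.span ℝ (Set.range (unitsLog K)) := by
  classical
  set S := Submodule.span ℝ (Set.range (unitsLog K))
  let w₀ := Units.dirichletUnitTheorem.w₀ (K := K)
  let π : (InfinitePlace K → ℝ) →ₗ[ℝ] Units.dirichletUnitTheorem.logSpace K :=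
    LinearMap.funLeft ℝ ℝ Subtype.val
  have hπ : S.map π = ⊤ := by
    rw [eq_top_iff, ← Units.dirichletUnitTheorem.unitLattice_span_eq_top, Submodule.map_span,
      Submodule.span_le]
    rintro _ ⟨u, -, rfl⟩
    exact Submodule.subset_span ⟨unitsLog K u, ⟨u, rfl⟩, rfl⟩
  have hS (z) (hz : z ∈ S) : ∑ w, z w = 0 := by
    induction hz using Submodule.span_induction with
    | mem _ h => obtain ⟨u, rfl⟩ := h; exact sum_unitsLog u
    | zero => simp
    | add _ _ _ _ h₁ h₂ => simp [sum_add_distrib, h₁, h₂]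
    | smul _ _ _ h => simp [← mul_sum, h]
  obtain ⟨z, hzS, hπz⟩ := Submodule.mem_map.mp (hπ ▸ Submodule.mem_top : π x ∈ S.map π)
  have hz := hS z hzS
  have hne (w : {w // w ≠ w₀}) : x w = z w := (congrFun hπz w).symm
  suffices x = z from this ▸ hzS
  ext w
  by_cases hw : w = w₀
  · rw [Fintype.sum_eq_add_sum_subtype_ne _ w₀] at hx hz
    simp only [hne] at hx
    rw [hw]
    linarith
  · exact hne ⟨w, hw⟩

end Dirichlet

section NormOne

variable (k : Type*) {K : Type*} [Field k] [Field K] [Algebra k K]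

def unitsAlgebraMapNorm (u : (𝓞 K)ˣ) : (𝓞 K)ˣ :=
  Units.map (algebraMap (𝓞 k) (𝓞 K)).toMonoidHom (Units.map (RingOfIntegers.norm k) u)

theorem coe_unitsAlgebraMapNorm (u : (𝓞 K)ˣ) :
    ((unitsAlgebraMapNorm k u : 𝓞 K) : K) = algebraMap k K (Algebra.norm k ((u : 𝓞 K) : K)) :=
  RingOfIntegers.coe_algebraMap_norm k (u : 𝓞 K)

def normOneUnit (u : (𝓞 K)ˣ) : (𝓞 K)ˣ := u ^ Module.finrank k K * (unitsAlgebraMapNorm k u)⁻¹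

theorem coe_normOneUnit_mul (u : (𝓞 K)ˣ) :
    ((normOneUnit k u : 𝓞 K) : K) * algebraMap k K (Algebra.norm k ((u : 𝓞 K) : K)) =
      ((u : 𝓞 K) : K) ^ Module.finrank k K := by
  have := congrArg (fun a : (𝓞 K)ˣ ↦ ((a : 𝓞 K) : K))
    (inv_mul_cancel_right (u ^ Module.finrank k K) (unitsAlgebraMapNorm k u))
  change ((normOneUnit k u * unitsAlgebraMapNorm k u : (𝓞 K)ˣ) : K) = _ at this
  simpa [coe_unitsAlgebraMapNorm] using this

theorem norm_normOneUnit [FiniteDimensional k K] (u : (𝓞 K)ˣ) :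
    Algebra.norm k ((normOneUnit k u : 𝓞 K) : K) = 1 := by
  have h := congrArg (Algebra.norm k) (coe_normOneUnit_mul k u)
  rw [map_mul, map_pow, Algebra.norm_algebraMap] at h
  have hu : Algebra.norm k ((u : 𝓞 K) : K) ≠ 0 :=
    Algebra.norm_ne_zero_iff.mpr (Units.coe_ne_zero u)
  exact mul_right_cancel₀ (pow_ne_zero _ hu) (h.trans (one_mul _).symm)

variable [NumberField K]

open scoped Classical in
def fiberSum : (InfinitePlace K → ℝ) →ₗ[ℝ] (InfinitePlace K → ℝ) where
  toFun y w := (w.mult / (w.comap (algebraMap k K)).mult : ℝ) *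
    ∑ w' : InfinitePlace K with w'.comap (algebraMap k K) = w.comap (algebraMap k K), y w'
  map_add' y z := by ext; simp [sum_add_distrib, mul_add]
  map_smul' c y := by
    ext
    simp only [Pi.smul_apply, smul_eq_mul, RingHom.id_apply, ← mul_sum]
    ring

open scoped Classical in
theorem fiberSum_apply (y : InfinitePlace K → ℝ) (w : InfinitePlace K) :
    fiberSum k y w = (w.mult / (w.comap (algebraMap k K)).mult : ℝ) *
      ∑ w' : InfinitePlace K with w'.comap (algebraMap k K) = w.comap (algebraMap k K), y w' :=
  rfl

open scoped Classical in
theorem fiberSum_single_sub_single {w₁ w₂ : InfinitePlace K}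
    (h : w₁.comap (algebraMap k K) = w₂.comap (algebraMap k K)) :
    fiberSum k (Pi.single w₁ 1 - Pi.single w₂ 1) = 0 := by
  ext w
  simp [fiberSum_apply, sum_sub_distrib, Finset.sum_pi_single', h]

variable [NumberField k]

theorem logVector_algebraMap_norm {x : K} (hx : x ≠ 0) :
    logVector (algebraMap k K (Algebra.norm k x)) = fiberSum k (logVector x) := by
  classical
  ext w
  have h := congrArg Real.log (prod_comap_eq_pow_mult_norm (w.comap (algebraMap k K)) x)
  rw [Real.log_prod (fun w _ ↦ pow_ne_zero _ (w.pos_iff.mpr hx).ne'), Real.log_pow] at h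
  simp_rw [Real.log_pow] at h
  have hv : ((w.comap (algebraMap k K)).mult : ℝ) ≠ 0 := Nat.cast_ne_zero.mpr mult_ne_zero
  rw [fiberSum_apply]
  simp only [logVector, ← comap_apply, h]
  field_simp

theorem unitsLog_normOneUnit (u : (𝓞 K)ˣ) :
    unitsLog K (.ofMul (normOneUnit k u)) =
      Module.finrank k K • unitsLog K (.ofMul u) - fiberSum k (unitsLog K (.ofMul u)) := by
  rw [normOneUnit, ofMul_mul, map_add, ofMul_pow, map_nsmul, ofMul_inv, map_neg, unitsLog_apply,
    unitsLog_apply (unitsAlgebraMapNorm k u), coe_unitsAlgebraMapNorm,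
    logVector_algebraMap_norm k (Units.coe_ne_zero u), sub_eq_add_neg]

end NormOne

theorem span_image_le_span_image_of_relIndex_ne_zero {𝕜 A E : Type*} [DivisionRing 𝕜]
    [CharZero 𝕜] [AddCommGroup A] [AddCommGroup E] [Module 𝕜 E] (f : A →+ E)
    {U N : AddSubgroup A} (h : U.relIndex N ≠ 0) :
    Submodule.span 𝕜 (f '' N) ≤ Submodule.span 𝕜 (f '' U) := by
  rw [Submodule.span_le]
  rintro _ ⟨a, ha, rfl⟩
  have hn : (U.relIndex N : 𝕜) ≠ 0 := Nat.cast_ne_zero.mpr h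
  have : f a = (U.relIndex N : 𝕜)⁻¹ • f (U.relIndex N • a) := by
    rw [map_nsmul, ← Nat.cast_smul_eq_nsmul 𝕜, inv_smul_smul₀ hn]
  rw [this]
  exact Submodule.smul_mem _ _ (Submodule.subset_span ⟨_, U.nsmul_relIndex_mem ha, rfl⟩)

open scoped Classical in
theorem single_sub_single_mem_span_unitsLog {k K : Type*} [Field k] [Field K] [NumberField k]
    [NumberField K] [Algebra k K] {w₁ w₂ : InfinitePlace K}
    (hw : w₁.comap (algebraMap k K) = w₂.comap (algebraMap k K)) {N U : Subgroup (𝓞 K)ˣ}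
    (hN : ∀ u : (𝓞 K)ˣ, Algebra.norm k ((u : 𝓞 K) : K) = 1 → u ∈ N)
    (hindex : U.relIndex N ≠ 0) :
    Pi.single w₁ 1 - Pi.single w₂ 1 ∈ Submodule.span ℝ (unitsLog K '' U.toAddSubgroup) := by
  set e : InfinitePlace K → ℝ := Pi.single w₁ 1 - Pi.single w₂ 1
  set n := Module.finrank k K
  let T := (n : ℝ) • LinearMap.id - fiberSum (K := K) k
  have hT (u : Additive (𝓞 K)ˣ) :
      T (unitsLog K u) = unitsLog K (.ofMul (normOneUnit k u.toMul)) := by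
    simp [T, n, unitsLog_normOneUnit, Nat.cast_smul_eq_nsmul]
  have hn : (n : ℝ) ≠ 0 := Nat.cast_ne_zero.mpr Module.finrank_pos.ne'
  have hTe : T ((n : ℝ)⁻¹ • e) = e := by
    simp [T, fiberSum_single_sub_single k hw, e, smul_smul, inv_mul_cancel₀ hn]
  have he : (n : ℝ)⁻¹ • e ∈ Submodule.span ℝ (Set.range (unitsLog K)) :=
    mem_span_range_unitsLog (K := K) (by simp [e, ← mul_sum, sum_sub_distrib])
  refine span_image_le_span_image_of_relIndex_ne_zero (unitsLog K)
    (by rwa [Subgroup.relIndex_toAddSubgroup]) ?_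
  rw [← hTe]
  have := Submodule.mem_map_of_mem (f := T) he
  rw [Submodule.map_span] at this
  refine Submodule.span_mono ?_ this
  rintro _ ⟨_, ⟨u, rfl⟩, rfl⟩
  exact ⟨_, hN _ (norm_normOneUnit k u.toMul), (hT u).symm⟩

section Approximation

variable {E : Type*} [NormedAddCommGroup E] [NormedSpace ℝ E]

theorem exists_forall_exists_mem_norm_nsmul_sub_le {Λ : AddSubgroup E} {v : E}
    (hv : v ∈ Submodule.span ℝ (Λ : Set E)) : ∃ R, ∀ m : ℕ, ∃ μ ∈ Λ, ‖m • v - μ‖ ≤ R := by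
  obtain ⟨n, f, g, rfl⟩ := Submodule.mem_span_set'.mp hv
  refine ⟨∑ i, ‖(g i : E)‖, fun m ↦ ⟨∑ i, ⌊m * f i⌋ • (g i : E),
    sum_mem fun i _ ↦ zsmul_mem (g i).2 _, ?_⟩⟩
  have : m • ∑ i, f i • (g i : E) - ∑ i, ⌊m * f i⌋ • (g i : E)
      = ∑ i, Int.fract (m * f i) • (g i : E) := by
    rw [smul_sum, ← sum_sub_distrib]
    refine sum_congr rfl fun i _ ↦ ?_
    rw [Int.fract, sub_smul, ← Int.cast_smul_eq_zsmul ℝ, ← Nat.cast_smul_eq_nsmul ℝ, smul_smul]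
  rw [this]
  refine (norm_sum_le _ _).trans (sum_le_sum fun i _ ↦ ?_)
  rw [norm_smul, Real.norm_of_nonneg (Int.fract_nonneg _)]
  exact mul_le_of_le_one_left (norm_nonneg _) (Int.fract_lt_one _).le

theorem exists_nsmul_sub_mem_norm_lt [ProperSpace E] {Λ : AddSubgroup E} {v : E}
    (hv : v ∈ Submodule.span ℝ (Λ : Set E)) {η : ℝ} (hη : 0 < η) :
    ∃ n : ℕ, 0 < n ∧ ∃ μ ∈ Λ, ‖n • v - μ‖ < η := by
  obtain ⟨R, hR⟩ := exists_forall_exists_mem_norm_nsmul_sub_le hv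
  choose μ hμΛ hμR using hR
  obtain ⟨a, -, ψ, hψ, hlim⟩ := (isCompact_closedBall (0 : E) R).tendsto_subseq
    (x := fun m ↦ m • v - μ m) (fun m ↦ by simpa using hμR m)
  obtain ⟨M, hM⟩ := Metric.cauchySeq_iff'.mp hlim.cauchySeq η hη
  have hlt : ψ M < ψ (M + 1) := hψ M.lt_succ_self
  refine ⟨ψ (M + 1) - ψ M, Nat.sub_pos_of_lt hlt, μ (ψ (M + 1)) - μ (ψ M),
    sub_mem (hμΛ _) (hμΛ _), ?_⟩
  convert hM (M + 1) M.le_succ using 1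
  rw [dist_eq_norm, sub_nsmul v hlt.le]
  congr 1
  simp only [Function.comp_apply]
  abel

end Approximation

theorem exists_mem_forall_abs_unitsLog_sub_mul_lt {K : Type*} [Field K] [NumberField K]
    {U : Subgroup (𝓞 K)ˣ} {e : InfinitePlace K → ℝ}
    (he : e ∈ Submodule.span ℝ (unitsLog K '' U.toAddSubgroup)) {η : ℝ} (hη : 0 < η) (T : ℝ) :
    ∃ u ∈ U, ∃ t ≥ T, ∀ w, |unitsLog K (.ofMul u) w - t * e w| < η := by
  obtain ⟨n, hn, _, ⟨u, hu, rfl⟩, hclose⟩ := exists_nsmul_sub_mem_norm_lt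
    (Λ := U.toAddSubgroup.map (unitsLog K)) (Submodule.smul_mem _ (max T 0) he) hη
  refine ⟨u.toMul, hu, max T 0 * n, ?_, fun w ↦ ?_⟩
  · exact (le_max_left _ _).trans
      (le_mul_of_one_le_right (le_max_right _ _) (Nat.one_le_cast.mpr hn))
  · rw [abs_sub_comm]
    refine lt_of_le_of_lt ?_ hclose
    simpa [nsmul_eq_mul, mul_assoc] using norm_le_pi_norm (n • max T 0 • e - unitsLog K u) w

theorem inv_lt_exp_and_exp_lt_of_abs_lt_log {a t : ℝ} (ha : 0 < a) (h : |t| < Real.log a) :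
    a⁻¹ < Real.exp t ∧ Real.exp t < a := by
  rw [← Real.exp_log ha, ← Real.exp_neg, Real.exp_lt_exp, Real.exp_lt_exp]
  exact abs_lt.mp h

end

theorem stmt6_general (k K : Type*) [Field k] [Field K] [NumberField k] [NumberField K]
    [Algebra k K]
    (v₀ : InfinitePlace k)
    (hsplit : ∃ w₁ w₂ : InfinitePlace K, w₁ ≠ w₂ ∧
      w₁.comap (algebraMap k K) = v₀ ∧ w₂.comap (algebraMap k K) = v₀)
    (w₀ : InfinitePlace K) (hw₀ : w₀.comap (algebraMap k K) = v₀)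
    (N U : Subgroup (𝓞 K)ˣ)
    (hN : ∀ ε : (𝓞 K)ˣ, ε ∈ N ↔ Algebra.norm k ((ε : 𝓞 K) : K) = 1)
    (hindex : U.relIndex N ≠ 0) :
    ∀ δ : ℝ, 0 < δ → ∃ ε ∈ U,
      w₀ ((ε : 𝓞 K) : K) ^ w₀.mult < δ ∧
      ∀ w : InfinitePlace K, w.comap (algebraMap k K) ≠ v₀ →
        1 / (1 + δ) < w ((ε : 𝓞 K) : K) ^ w.mult ∧
        w ((ε : 𝓞 K) : K) ^ w.mult < 1 + δ := by
  classical
  intro δ hδ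
  obtain ⟨w₁, hw₁w₀, hw₁⟩ : ∃ w₁, w₁ ≠ w₀ ∧ w₁.comap (algebraMap k K) = v₀ := by
    obtain ⟨w₁, w₂, h12, h1, h2⟩ := hsplit
    by_cases h : w₁ = w₀
    · exact ⟨w₂, h ▸ h12.symm, h2⟩
    · exact ⟨w₁, h, h1⟩
  have he := single_sub_single_mem_span_unitsLog (hw₁.trans hw₀.symm) (fun u ↦ (hN u).mpr) hindex
  obtain ⟨ε, hεU, t, ht, hε⟩ := exists_mem_forall_abs_unitsLog_sub_mul_lt he
    (Real.log_pos (lt_add_of_pos_right 1 hδ)) (Real.log (1 + δ) - Real.log δ)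
  refine ⟨ε, hεU, ?_, fun w hw ↦ ?_⟩
  · have h := abs_lt.mp (hε w₀)
    simp only [Pi.sub_apply, Pi.single_eq_same, Pi.single_eq_of_ne hw₁w₀.symm] at h
    rw [pow_mult_eq_exp_unitsLog, ← Real.exp_log hδ, Real.exp_lt_exp]
    linarith
  · have hw' : ∀ w', w'.comap (algebraMap k K) = v₀ → w ≠ w' := by rintro _ h rfl; exact hw h
    have h := hε w
    simp only [Pi.sub_apply, Pi.single_eq_of_ne (hw' _ hw₁), Pi.single_eq_of_ne (hw' _ hw₀),
      sub_zero, mul_zero] at h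
    rw [pow_mult_eq_exp_unitsLog, one_div]
    exact inv_lt_exp_and_exp_lt_of_abs_lt_log (by linarith) h

/-- Let `K/k` be a quadratic extension of number fields, `v₀` an archimedean place of `k`
with `K ⊆ k_{v₀}` (i.e. `v₀` splits in `K`), `w₀` a place of `K` above `v₀`, and `U` a
finite-index subgroup of the norm-one unit group `𝔬_K¹`. Then for every `δ > 0` there is
`ε ∈ U` with `|ε|_{w₀} < δ` and `1/(1+δ) < |ε|_w < 1+δ` for all archimedean places `w`
not above `v₀`; absolute values are normalized by the local degrees `mult`. -/
theorem stmt6 (k K : Type*) [Field k] [Field K] [NumberField k] [NumberField K]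
    [Algebra k K] (hquad : Module.finrank k K = 2)
    (v₀ : InfinitePlace k)
    (hsplit : ∃ w₁ w₂ : InfinitePlace K, w₁ ≠ w₂ ∧
      w₁.comap (algebraMap k K) = v₀ ∧ w₂.comap (algebraMap k K) = v₀)
    (w₀ : InfinitePlace K) (hw₀ : w₀.comap (algebraMap k K) = v₀)
    (N U : Subgroup (𝓞 K)ˣ)
    (hN : ∀ ε : (𝓞 K)ˣ, ε ∈ N ↔ Algebra.norm k ((ε : 𝓞 K) : K) = 1)
    (hUN : U ≤ N) (hindex : U.relIndex N ≠ 0) :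
    ∀ δ : ℝ, 0 < δ → ∃ ε ∈ U,
      w₀ ((ε : 𝓞 K) : K) ^ w₀.mult < δ ∧
      ∀ w : InfinitePlace K, w.comap (algebraMap k K) ≠ v₀ →
        1 / (1 + δ) < w ((ε : 𝓞 K) : K) ^ w.mult ∧
        w ((ε : 𝓞 K) : K) ^ w.mult < 1 + δ :=
  stmt6_general k K v₀ hsplit w₀ hw₀ N U hN hindex
end

section
/- Let q > 1 be an integer and (a₀, a₁, b₀, b₁) ∈ ℤ⁴ with a₀b₀ − a₁b₁ ≡ ±1 (mod q). Then there exist integers s₀, s₁, t₀, t₁ with gcd(s₀,s₁) = 1, s₀t₀ − s₁t₁ ∈ {1, −1}, and (s₀, s₁, t₀, t₁) ≡ (a₀, a₁, b₀, b₁) (mod q). -/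
/-- Coprime lifting: if no nonunit divides `x`, `y`, `n` simultaneously and `x ≠ 0`,
then some `y + n * k` is coprime to `x`. -/
lemma coprime_lift (x y n : ℤ) (hx : x ≠ 0)
    (h : ∀ d : ℤ, d ∣ x → d ∣ y → d ∣ n → IsUnit d) :
    ∃ k : ℤ, IsCoprime x (y + n * k) := by
  classical
  set ps := x.natAbs.primeFactors.filter (fun p : ℕ => ¬ (p : ℤ) ∣ y) with hps
  refine ⟨ps.prod fun p : ℕ => (p : ℤ), ?_⟩
  rw [Int.isCoprime_iff_gcd_eq_one]
  apply Nat.coprime_of_dvd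
  intro p pp hpx hpy
  have hpxZ : (p : ℤ) ∣ x := by
    rwa [← Int.natAbs_dvd_natAbs, Int.natAbs_natCast]
  have hpyZ : (p : ℤ) ∣ y + n * ps.prod fun p : ℕ => (p : ℤ) := by
    rwa [← Int.natAbs_dvd_natAbs, Int.natAbs_natCast]
  have ppZ : Prime (p : ℤ) := Nat.prime_iff_prime_int.mp pp
  by_cases hy : (p : ℤ) ∣ y
  · have hnk : (p : ℤ) ∣ n * ps.prod fun p : ℕ => (p : ℤ) := (dvd_add_right hy).mp hpyZ
    rcases ppZ.dvd_mul.mp hnk with hn | hk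
    · exact ppZ.not_unit (h _ hpxZ hy hn)
    · obtain ⟨r, hr, hr'⟩ := (Prime.dvd_finset_prod_iff ppZ (fun p : ℕ => (p : ℤ))).mp hk
      have hrmem := Finset.mem_filter.mp hr
      have hrp : r.Prime := Nat.prime_of_mem_primeFactors hrmem.1
      have : p = r := by
        have : p ∣ r := by rwa [Int.natCast_dvd_natCast] at hr'
        exact ((Nat.prime_dvd_prime_iff_eq pp hrp).mp this)
      exact hrmem.2 (this ▸ hy)
  · have hmem : p ∈ ps := by
      refine Finset.mem_filter.mpr ⟨Nat.mem_primeFactors.mpr ⟨pp, hpx, ?_⟩, hy⟩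
      simpa using hx
    have hk : (p : ℤ) ∣ ps.prod fun p : ℕ => (p : ℤ) :=
      Finset.dvd_prod_of_mem _ hmem
    have : (p : ℤ) ∣ y := (dvd_add_left (hk.mul_left n)).mp hpyZ
    exact hy this

/-- Strong approximation step for the integral Hilbert property: given `q > 1` and a
residue tuple `(a₀,a₁,b₀,b₁)` with `a₀b₀ − a₁b₁ ≡ ±1 (mod q)`, there are integers
`s₀, s₁, t₀, t₁` with `gcd(s₀,s₁) = 1`, `s₀t₀ − s₁t₁ = ±1`, congruent to
`(a₀,a₁,b₀,b₁)` modulo `q`. -/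
theorem stmt12 (q : ℤ) (hq : 1 < q) (a₀ a₁ b₀ b₁ : ℤ)
    (h : a₀ * b₀ - a₁ * b₁ ≡ 1 [ZMOD q] ∨ a₀ * b₀ - a₁ * b₁ ≡ -1 [ZMOD q]) :
    ∃ s₀ s₁ t₀ t₁ : ℤ, IsCoprime s₀ s₁ ∧
      (s₀ * t₀ - s₁ * t₁ = 1 ∨ s₀ * t₀ - s₁ * t₁ = -1) ∧
      s₀ ≡ a₀ [ZMOD q] ∧ s₁ ≡ a₁ [ZMOD q] ∧ t₀ ≡ b₀ [ZMOD q] ∧ t₁ ≡ b₁ [ZMOD q] := by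
  -- extract the sign `e` and the divisibility
  obtain ⟨e, he, hdvd⟩ : ∃ e : ℤ, (e = 1 ∨ e = -1) ∧ q ∣ e - (a₀ * b₀ - a₁ * b₁) := by
    rcases h with h | h
    · exact ⟨1, Or.inl rfl, h.dvd⟩
    · exact ⟨-1, Or.inr rfl, h.dvd⟩
  have hq0 : q ≠ 0 := by positivity
  -- adjust a₀ to be nonzero
  set a₀' : ℤ := if a₀ = 0 then q else a₀ with ha₀'
  have ha₀'ne : a₀' ≠ 0 := by
    by_cases h0 : a₀ = 0 <;> simp [ha₀', h0, hq0]
  have hdiff : q ∣ a₀' - a₀ := by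
    by_cases h0 : a₀ = 0 <;> simp [ha₀', h0]
  -- coprime lift
  obtain ⟨k, hco⟩ : ∃ k : ℤ, IsCoprime a₀' (a₁ + q * k) := by
    apply coprime_lift _ _ _ ha₀'ne
    intro d hd0 hd1 hdq
    have hda₀ : d ∣ a₀ := by
      have h1 : d ∣ a₀' - a₀ := hdq.trans hdiff
      have := hd0.sub h1
      simpa using this
    have hX : d ∣ a₀ * b₀ - a₁ * b₁ := (hda₀.mul_right b₀).sub (hd1.mul_right b₁)
    have hde : d ∣ e := by
      have := (hdq.trans hdvd).add hX
      simpa using this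
    apply isUnit_of_dvd_one
    rcases he with rfl | rfl
    · exact hde
    · exact dvd_neg.mp hde
  set s₀ : ℤ := a₀' with hs₀
  set s₁ : ℤ := a₁ + q * k with hs₁
  -- s₀ b₀ - s₁ b₁ ≡ e mod q
  obtain ⟨c, hc⟩ : ∃ c : ℤ, e - (s₀ * b₀ - s₁ * b₁) = q * c := by
    obtain ⟨u, hu⟩ := hdiff
    obtain ⟨v, hv⟩ := hdvd
    exact ⟨v - u * b₀ + k * b₁, by rw [hs₀, hs₁]; linear_combination hv - b₀ * hu⟩
  obtain ⟨α, β, hαβ⟩ := hco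
  refine ⟨s₀, s₁, b₀ + q * (α * c), b₁ + q * (-(β * c)), ⟨α, β, hαβ⟩, ?_, ?_, ?_, ?_, ?_⟩
  · have key : s₀ * (b₀ + q * (α * c)) - s₁ * (b₁ + q * (-(β * c))) = e := by
      linear_combination (q * c) * hαβ - hc
    rcases he with rfl | rfl
    · exact Or.inl key
    · exact Or.inr key
  · obtain ⟨u, hu⟩ := hdiff
    exact Int.modEq_iff_dvd.mpr ⟨-u, by rw [hs₀]; linear_combination -hu⟩
  · exact Int.modEq_iff_dvd.mpr ⟨-k, by rw [hs₁]; ring⟩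
  · exact Int.modEq_iff_dvd.mpr ⟨-(α * c), by ring⟩
  · exact Int.modEq_iff_dvd.mpr ⟨β * c, by ring⟩
end
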